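/- arXiv:2402.10470 — 4 statements merged into one kernel-verified Lean document; each statement's English description precedes it below -/
import Mathlib

section
/- Let x_1,...,x_N ∈ ℝ^d and z ∈ ℝ^d. Suppose there exist constants c, C, K > 0 with c·d ≤ ‖x_n‖^2 ≤ C·d for all n, ‖z‖^2 ≤ C·d, and |⟨x_n, x_k⟩| ≤ K·d/N for all n ≠ k. Then ∑_{n=1}^N ⟨x_n, z⟩^2 ≤ C'·d^2 for a constant C' depending only on c, C, K (in particular, independent of N and d). -/
open Real

/-!
Put `a n = ⟨x_n, z⟩`, `T = ∑ a_n²` and `v = ∑ a_n x_n`, so that `T = ⟨v, z⟩ ≤ ‖v‖ ‖z‖`.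
Near-orthogonality bounds the Gram form: `‖v‖² ≤ (C d + N · K d / N) · T`, the off-diagonal
part via `(∑ |a_n|)² ≤ N T`. Hence `T² ≤ (C + K) d T · C d`, i.e. `T ≤ C (C + K) d²`.
-/

open Finset RealInnerProductSpace

section AlmostOrthogonal

variable {ι E : Type*} [Fintype ι] [NormedAddCommGroup E] [InnerProductSpace ℝ E]

lemma norm_sum_smul_sq_le_of_abs_inner_le (a : ι → ℝ) (x : ι → E) {A B : ℝ} (hB : 0 ≤ B)
    (hdiag : ∀ i, ‖x i‖ ^ 2 ≤ A) (hoff : ∀ i j, i ≠ j → |⟪x i, x j⟫| ≤ B) :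
    ‖∑ i, a i • x i‖ ^ 2 ≤ (A + Fintype.card ι * B) * ∑ i, a i ^ 2 := by
  classical
  have hterm : ∀ i j,
      a i * a j * ⟪x i, x j⟫ ≤ (if i = j then A * a i ^ 2 else 0) + B * (|a i| * |a j|) := by
    intro i j
    split_ifs with hij
    · subst hij
      rw [real_inner_self_eq_norm_sq]
      nlinarith [hdiag i, sq_nonneg (a i), mul_nonneg hB (mul_self_nonneg |a i|)]
    · calc a i * a j * ⟪x i, x j⟫ ≤ |a i| * |a j| * |⟪x i, x j⟫| := by
            rw [← abs_mul, ← abs_mul]; exact le_abs_self _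
        _ ≤ |a i| * |a j| * B := by gcongr; exact hoff i j hij
        _ = 0 + B * (|a i| * |a j|) := by ring
  have hcs : (∑ i, |a i|) ^ 2 ≤ Fintype.card ι * ∑ i, a i ^ 2 := by
    simpa only [sq_abs, card_univ] using sq_sum_le_card_mul_sum_sq (s := univ) (f := fun i => |a i|)
  calc ‖∑ i, a i • x i‖ ^ 2 = ∑ i, ∑ j, a i * a j * ⟪x i, x j⟫ := by
        rw [← real_inner_self_eq_norm_sq, sum_inner]
        simp only [inner_sum, real_inner_smul_left, real_inner_smul_right]
        exact sum_congr rfl fun i _ => sum_congr rfl fun j _ => by ring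
    _ ≤ ∑ i, ∑ j, ((if i = j then A * a i ^ 2 else 0) + B * (|a i| * |a j|)) := by
        gcongr with i _ j _; exact hterm i j
    _ = A * ∑ i, a i ^ 2 + B * (∑ i, |a i|) ^ 2 := by
        simp only [sum_add_distrib, sum_ite_eq, mem_univ, if_true, ← mul_sum, sq, sum_mul_sum]
    _ ≤ A * ∑ i, a i ^ 2 + B * (Fintype.card ι * ∑ i, a i ^ 2) := by gcongr
    _ = (A + Fintype.card ι * B) * ∑ i, a i ^ 2 := by ring

lemma sum_inner_sq_le_of_abs_inner_le (x : ι → E) (z : E) {A B : ℝ} (hA : 0 ≤ A) (hB : 0 ≤ B)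
    (hdiag : ∀ i, ‖x i‖ ^ 2 ≤ A) (hoff : ∀ i j, i ≠ j → |⟪x i, x j⟫| ≤ B) :
    ∑ i, ⟪x i, z⟫ ^ 2 ≤ (A + Fintype.card ι * B) * ‖z‖ ^ 2 := by
  set T := ∑ i, ⟪x i, z⟫ ^ 2
  set v := ∑ i, ⟪x i, z⟫ • x i
  set M := (A + Fintype.card ι * B) * ‖z‖ ^ 2
  have hT : 0 ≤ T := sum_nonneg fun i _ => sq_nonneg _
  have hM : 0 ≤ M := by positivity
  have hvz : ⟪v, z⟫ = T := by simp only [v, T, sum_inner, real_inner_smul_left, sq]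
  have hv := norm_sum_smul_sq_le_of_abs_inner_le (fun i => ⟪x i, z⟫) x hB hdiag hoff
  have hTsq : T ^ 2 ≤ M * T :=
    calc T ^ 2 ≤ (‖v‖ * ‖z‖) ^ 2 := by
          rw [← hvz]; exact pow_le_pow_left₀ (hvz ▸ hT) (real_inner_le_norm v z) 2
      _ = ‖v‖ ^ 2 * ‖z‖ ^ 2 := by ring
      _ ≤ (A + Fintype.card ι * B) * T * ‖z‖ ^ 2 := by gcongr
      _ = M * T := by ring
  nlinarith

end AlmostOrthogonal

theorem stmt_7_general (c C K : ℝ) (hC : 0 < C) (hK : 0 < K) :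
    ∃ C' : ℝ, 0 < C' ∧
      ∀ (d N : ℕ), 0 < d → 0 < N →
        ∀ (x : Fin N → EuclideanSpace ℝ (Fin d)) (z : EuclideanSpace ℝ (Fin d)),
          (∀ n, c * d ≤ ‖x n‖ ^ 2) → (∀ n, ‖x n‖ ^ 2 ≤ C * d) → ‖z‖ ^ 2 ≤ C * d →
          (∀ n k, n ≠ k → |(inner ℝ (x n) (x k) : ℝ)| ≤ K * d / N) →
          ∑ n, (inner ℝ (x n) z : ℝ) ^ 2 ≤ C' * (d : ℝ) ^ 2 := by
  refine ⟨C * (C + K), by positivity, fun d N _ hN x z _ hup hz hoff => ?_⟩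
  have hN : (N : ℝ) ≠ 0 := by positivity
  calc ∑ n, (inner ℝ (x n) z : ℝ) ^ 2 ≤ (C * d + N * (K * d / N)) * ‖z‖ ^ 2 := by
        simpa only [Fintype.card_fin] using
          sum_inner_sq_le_of_abs_inner_le x z (by positivity) (by positivity) hup hoff
    _ = (C + K) * d * ‖z‖ ^ 2 := by field_simp
    _ ≤ (C + K) * d * (C * d) := by gcongr
    _ = C * (C + K) * (d : ℝ) ^ 2 := by ring

/-- Upper bound on the sum of squared inner products with nearly orthogonal vectors:
under `c·d ≤ ‖x_n‖² ≤ C·d`, `‖z‖² ≤ C·d`, `|⟨x_n,x_k⟩| ≤ K·d/N` for `n ≠ k`, one has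
`∑ ⟨x_n, z⟩² ≤ C'·d²` for a constant `C'` depending only on `c, C, K`. -/
theorem stmt_7 (c C K : ℝ) (hc : 0 < c) (hC : 0 < C) (hK : 0 < K) :
    ∃ C' : ℝ, 0 < C' ∧
      ∀ (d N : ℕ), 0 < d → 0 < N →
        ∀ (x : Fin N → EuclideanSpace ℝ (Fin d)) (z : EuclideanSpace ℝ (Fin d)),
          (∀ n, c * d ≤ ‖x n‖ ^ 2) → (∀ n, ‖x n‖ ^ 2 ≤ C * d) → ‖z‖ ^ 2 ≤ C * d →
          (∀ n k, n ≠ k → |(inner ℝ (x n) (x k) : ℝ)| ≤ K * d / N) →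
          ∑ n, (inner ℝ (x n) z : ℝ) ^ 2 ≤ C' * (d : ℝ) ^ 2 :=
  stmt_7_general c C K hC hK
end

section
/- Let x_1,...,x_N ∈ ℝ^d with R_min ≤ ‖x_n‖ ≤ R_max for all n and max_{n≠k}|⟨x_n,x_k⟩| ≤ p_max, and let f^bdy(z) = ∑_{k=1}^N λ_k y_k ⟨x_k, z⟩ with y_k ∈ {±1} and λ_k ∈ (1/(2R_max^2), 3/(2γ^2 R_min^2)) for a fixed γ ∈ (0,1). If γ^3 R_min^4 / (3N R_max^2) ≥ p_max, then for every n, sgn(f^bdy(x_n)) = y_n; in fact y_n f^bdy(x_n) ≥ (1−γ)R_min^2/(2R_max^2) > 0. -/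
open Real

/-!
Since `y_n² = 1`, the margin `y_n f^bdy(x_n)` splits into the diagonal term `λ_n ‖x_n‖²`, which is
at least `R_min²/(2R_max²)`, and the `N - 1` cross terms `λ_k y_n y_k ⟨x_k, x_n⟩`. Each cross term
has size at most `(3/(2γ²R_min²)) · p_max ≤ γR_min²/(2N R_max²)`, so together they cost at most
`γR_min²/(2R_max²)`, leaving a margin of at least `(1 - γ)R_min²/(2R_max²)`.
-/

open Finset

theorem Real.sign_eq_of_mul_pos {y s : ℝ} (hy : y = 1 ∨ y = -1) (hpos : 0 < y * s) :
    Real.sign s = y := by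
  rcases hy with rfl | rfl
  · exact Real.sign_of_pos (by linarith)
  · exact Real.sign_of_neg (by linarith)

section Margin

variable {ι E : Type*} [Fintype ι] [DecidableEq ι] [NormedAddCommGroup E] [InnerProductSpace ℝ E]

theorem mul_sum_inner_eq_add_sum_erase (x : ι → E) (lam y : ι → ℝ) (n : ι) (hyn : |y n| = 1) :
    y n * ∑ k, lam k * y k * inner ℝ (x k) (x n) =
      lam n * ‖x n‖ ^ 2 + ∑ k ∈ univ.erase n, y n * (lam k * y k * inner ℝ (x k) (x n)) := by
  have hsq : y n * y n = 1 := by rw [← abs_mul_abs_self, hyn, one_mul]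
  rw [mul_sum, ← add_sum_erase _ _ (mem_univ n), real_inner_self_eq_norm_sq]
  congr 1
  linear_combination (lam n * ‖x n‖ ^ 2) * hsq

theorem sub_card_mul_le_mul_sum_inner (x : ι → E) (lam y : ι → ℝ) (n : ι) {c : ℝ} (hc : 0 ≤ c)
    (hy : ∀ k, |y k| = 1) (hcross : ∀ k, k ≠ n → |lam k * inner ℝ (x k) (x n)| ≤ c) :
    lam n * ‖x n‖ ^ 2 - Fintype.card ι * c ≤ y n * ∑ k, lam k * y k * inner ℝ (x k) (x n) := by
  have hterm : ∀ k ∈ univ.erase n, |y n * (lam k * y k * inner ℝ (x k) (x n))| ≤ c := by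
    intro k hk
    rw [show y n * (lam k * y k * inner ℝ (x k) (x n)) =
        y n * y k * (lam k * inner ℝ (x k) (x n)) by ring, abs_mul, abs_mul, hy n, hy k,
      one_mul, one_mul]
    exact hcross k (ne_of_mem_erase hk)
  have hcard : ((univ.erase n).card : ℝ) ≤ Fintype.card ι := by
    exact_mod_cast card_erase_le
  have hsum : |∑ k ∈ univ.erase n, y n * (lam k * y k * inner ℝ (x k) (x n))| ≤
      Fintype.card ι * c :=
    calc _ ≤ ∑ k ∈ univ.erase n, |y n * (lam k * y k * inner ℝ (x k) (x n))| :=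
          abs_sum_le_sum_abs _ _
      _ ≤ (univ.erase n).card * c := by
          simpa only [nsmul_eq_mul] using sum_le_card_nsmul _ _ _ hterm
      _ ≤ Fintype.card ι * c := mul_le_mul_of_nonneg_right hcard hc
  rw [mul_sum_inner_eq_add_sum_erase x lam y n (hy n)]
  linarith [neg_abs_le (∑ k ∈ univ.erase n, y n * (lam k * y k * inner ℝ (x k) (x n)))]

end Margin

theorem stmt_10_general (d N : ℕ)
    (x : Fin N → EuclideanSpace ℝ (Fin d)) (lam y : Fin N → ℝ)
    (Rmin Rmax pmax γ : ℝ) (hγ : 0 < γ ∧ γ < 1) (hRmin : 0 < Rmin)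
    (hnorm : ∀ n, Rmin ≤ ‖x n‖ ∧ ‖x n‖ ≤ Rmax)
    (hpmax : ∀ n k, n ≠ k → |(inner ℝ (x n) (x k) : ℝ)| ≤ pmax)
    (hy : ∀ n, y n = 1 ∨ y n = -1)
    (hlam : ∀ n, 1 / (2 * Rmax ^ 2) < lam n ∧ lam n < 3 / (2 * γ ^ 2 * Rmin ^ 2))
    (hcond : γ ^ 3 * Rmin ^ 4 / (3 * N * Rmax ^ 2) ≥ pmax) :
    ∀ n,
      Real.sign (∑ k, lam k * y k * (inner ℝ (x k) (x n) : ℝ)) = y n ∧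
      (1 - γ) * Rmin ^ 2 / (2 * Rmax ^ 2) ≤
        y n * ∑ k, lam k * y k * (inner ℝ (x k) (x n) : ℝ) ∧
      0 < (1 - γ) * Rmin ^ 2 / (2 * Rmax ^ 2) := by
  intro n
  obtain ⟨hγ0, hγ1⟩ := hγ
  have hRmax : 0 < Rmax := hRmin.trans_le ((hnorm n).1.trans (hnorm n).2)
  have hN : (0 : ℝ) < N := by exact_mod_cast n.pos
  have hlam0 : ∀ k, 0 < lam k := fun k => lt_trans (by positivity) (hlam k).1
  have hcross : ∀ k, k ≠ n →
      |lam k * inner ℝ (x k) (x n)| ≤ γ * Rmin ^ 2 / (2 * N * Rmax ^ 2) := by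
    intro k hk
    rw [abs_mul, abs_of_pos (hlam0 k)]
    calc lam k * |inner ℝ (x k) (x n)|
        ≤ 3 / (2 * γ ^ 2 * Rmin ^ 2) * (γ ^ 3 * Rmin ^ 4 / (3 * N * Rmax ^ 2)) :=
          mul_le_mul (hlam k).2.le ((hpmax k n hk).trans hcond) (abs_nonneg _) (by positivity)
      _ = γ * Rmin ^ 2 / (2 * N * Rmax ^ 2) := by field_simp
  have hdiag : Rmin ^ 2 / (2 * Rmax ^ 2) ≤ lam n * ‖x n‖ ^ 2 := by
    rw [div_eq_mul_one_div, mul_comm]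
    exact mul_le_mul (hlam n).1.le (pow_le_pow_left₀ hRmin.le (hnorm n).1 2) (by positivity)
      (hlam0 n).le
  have hmargin := sub_card_mul_le_mul_sum_inner x lam y n (by positivity)
    (fun k => (abs_eq zero_le_one).2 (hy k)) hcross
  rw [Fintype.card_fin, show (N : ℝ) * (γ * Rmin ^ 2 / (2 * N * Rmax ^ 2)) =
    γ * Rmin ^ 2 / (2 * Rmax ^ 2) by field_simp] at hmargin
  have hpos : 0 < (1 - γ) * Rmin ^ 2 / (2 * Rmax ^ 2) := by
    have : 0 < 1 - γ := by linarith
    positivity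
  have hbound : (1 - γ) * Rmin ^ 2 / (2 * Rmax ^ 2) ≤
      y n * ∑ k, lam k * y k * inner ℝ (x k) (x n) := by
    rw [mul_div_assoc, sub_mul, one_mul, ← mul_div_assoc]
    linarith
  exact ⟨Real.sign_eq_of_mul_pos (hy n) (hpos.trans_le hbound), hbound, hpos⟩

/-- Under near orthogonality `γ³R_min⁴/(3N R_max²) ≥ p_max`, the linear boundary
`f^bdy(z) = ∑ λ_k y_k ⟨x_k, z⟩` classifies every training sample correctly:
`sgn(f^bdy(x_n)) = y_n`, indeed `y_n f^bdy(x_n) ≥ (1−γ)R_min²/(2R_max²) > 0`. -/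
theorem stmt_10 (d N : ℕ) (hN : 0 < N)
    (x : Fin N → EuclideanSpace ℝ (Fin d)) (lam y : Fin N → ℝ)
    (Rmin Rmax pmax γ : ℝ) (hγ : 0 < γ ∧ γ < 1) (hRmin : 0 < Rmin)
    (hnorm : ∀ n, Rmin ≤ ‖x n‖ ∧ ‖x n‖ ≤ Rmax)
    (hpmax : ∀ n k, n ≠ k → |(inner ℝ (x n) (x k) : ℝ)| ≤ pmax)
    (hy : ∀ n, y n = 1 ∨ y n = -1)
    (hlam : ∀ n, 1 / (2 * Rmax ^ 2) < lam n ∧ lam n < 3 / (2 * γ ^ 2 * Rmin ^ 2))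
    (hcond : γ ^ 3 * Rmin ^ 4 / (3 * N * Rmax ^ 2) ≥ pmax) :
    ∀ n,
      Real.sign (∑ k, lam k * y k * (inner ℝ (x k) (x n) : ℝ)) = y n ∧
      (1 - γ) * Rmin ^ 2 / (2 * Rmax ^ 2) ≤
        y n * ∑ k, lam k * y k * (inner ℝ (x k) (x n) : ℝ) ∧
      0 < (1 - γ) * Rmin ^ 2 / (2 * Rmax ^ 2) :=
  stmt_10_general d N x lam y Rmin Rmax pmax γ hγ hRmin hnorm hpmax hy hlam hcond
end

section
/- Under the assumptions of the previous context (R_min ≤ ‖x_n‖ ≤ R_max, |⟨x_n,x_k⟩| ≤ p_max for n≠k, λ_k ∈ (1/(2R_max^2), 3/(2γ^2 R_min^2)), y_k ∈ {±1}, and p_max ≤ γ^3 R_min^4/(3N R_max^2)), for every n we have ⟨x_n, q⟩ ≤ 3R_max^2/(2γ^2 R_min^2) + γ R_min^2/(2R_max^2), where q = ∑_{k=1}^N λ_k y_k x_k. -/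
open Real Finset
open scoped RealInnerProductSpace

/-!
Expand `⟨x_n, q⟩ = ∑_k λ_k y_k ⟨x_n, x_k⟩` and bound every coefficient `|λ_k y_k| = λ_k` by
`λ_max = 3/(2γ²R_min²)`. The diagonal term contributes at most `λ_max R_max²`, the `N - 1`
off-diagonal ones at most `λ_max p_max` each, and the condition on `p_max` is exactly what makes
`N λ_max p_max ≤ γR_min²/(2R_max²)`.
-/

section InnerSum

variable {ι E : Type*} [NormedAddCommGroup E] [InnerProductSpace ℝ E]

theorem real_inner_sum_smul_le_sum_abs (s : Finset ι) (v : E) (c : ι → ℝ) (x : ι → E) :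
    ⟪v, ∑ k ∈ s, c k • x k⟫ ≤ ∑ k ∈ s, |c k| * |⟪v, x k⟫| := by
  rw [inner_sum]
  refine sum_le_sum fun k _ => ?_
  rw [real_inner_smul_right, ← abs_mul]
  exact le_abs_self _

theorem real_inner_sum_smul_le_of_abs_inner_le [Fintype ι] [DecidableEq ι] {c : ι → ℝ}
    {x : ι → E} {L R p : ℝ} (hc : ∀ k, |c k| ≤ L) (n : ι) (hR : ‖x n‖ ≤ R)
    (hp : ∀ k, k ≠ n → |⟪x n, x k⟫| ≤ p) :
    ⟪x n, ∑ k, c k • x k⟫ ≤ L * (R ^ 2 + (Fintype.card ι - 1 : ℝ) * p) := by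
  have hL : 0 ≤ L := (abs_nonneg _).trans (hc n)
  calc ⟪x n, ∑ k, c k • x k⟫ ≤ ∑ k, |c k| * |⟪x n, x k⟫| :=
        real_inner_sum_smul_le_sum_abs _ _ _ _
    _ = |c n| * ‖x n‖ ^ 2 + ∑ k ∈ univ.erase n, |c k| * |⟪x n, x k⟫| := by
        rw [← add_sum_erase _ _ (mem_univ n), real_inner_self_eq_norm_sq,
          abs_of_nonneg (sq_nonneg ‖x n‖)]
    _ ≤ L * R ^ 2 + ∑ _k ∈ univ.erase n, L * p := by
        gcongr with k hk
        · exact hc n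
        · exact hc k
        · exact hp k (ne_of_mem_erase hk)
    _ = L * (R ^ 2 + (Fintype.card ι - 1 : ℝ) * p) := by
        rw [sum_const, card_erase_of_mem (mem_univ n), card_univ, nsmul_eq_mul,
          Nat.cast_pred (Fintype.card_pos_iff.2 ⟨n⟩)]
        ring

end InnerSum

theorem stmt_11_general (d N : ℕ)
    (x : Fin N → EuclideanSpace ℝ (Fin d)) (lam y : Fin N → ℝ)
    (Rmin Rmax pmax γ : ℝ) (hγ : 0 < γ ∧ γ < 1) (hRmin : 0 < Rmin)
    (hnorm : ∀ n, Rmin ≤ ‖x n‖ ∧ ‖x n‖ ≤ Rmax)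
    (hpmax : ∀ n k, n ≠ k → |(inner ℝ (x n) (x k) : ℝ)| ≤ pmax)
    (hy : ∀ n, y n = 1 ∨ y n = -1)
    (hlam : ∀ n, 1 / (2 * Rmax ^ 2) < lam n ∧ lam n < 3 / (2 * γ ^ 2 * Rmin ^ 2))
    (hcond : pmax ≤ γ ^ 3 * Rmin ^ 4 / (3 * N * Rmax ^ 2)) :
    ∀ n, (inner ℝ (x n) (∑ k, (lam k * y k) • x k) : ℝ) ≤
      3 * Rmax ^ 2 / (2 * γ ^ 2 * Rmin ^ 2) + γ * Rmin ^ 2 / (2 * Rmax ^ 2) := by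
  intro n
  have hγ0 : 0 < γ := hγ.1
  have hRmax : 0 < Rmax := hRmin.trans_le ((hnorm n).1.trans (hnorm n).2)
  have hN : (1 : ℝ) ≤ N := by exact_mod_cast n.pos
  have hcoef : ∀ k, |lam k * y k| ≤ 3 / (2 * γ ^ 2 * Rmin ^ 2) := fun k => by
    have hlam_pos : 0 < lam k :=
      (by positivity : (0 : ℝ) ≤ 1 / (2 * Rmax ^ 2)).trans_lt (hlam k).1
    rcases hy k with h | h <;> simp [h, abs_of_pos hlam_pos, (hlam k).2.le]
  have hbound := real_inner_sum_smul_le_of_abs_inner_le hcoef n (hnorm n).2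
    fun k hk => hpmax n k hk.symm
  rw [Fintype.card_fin] at hbound
  refine hbound.trans ?_
  have hP : 0 ≤ γ ^ 3 * Rmin ^ 4 / (3 * N * Rmax ^ 2) := by positivity
  calc _ ≤ 3 / (2 * γ ^ 2 * Rmin ^ 2) *
          (Rmax ^ 2 + N * (γ ^ 3 * Rmin ^ 4 / (3 * N * Rmax ^ 2))) := by
        gcongr _ * (_ + ?_)
        nlinarith [mul_le_mul_of_nonneg_left hcond (sub_nonneg.2 hN)]
    _ = _ := by
        field_simp

/-- Upper bound on the correlation of a training sample with the weighted sum
`q = ∑ λ_k y_k x_k`: `⟨x_n, q⟩ ≤ 3R_max²/(2γ²R_min²) + γR_min²/(2R_max²)`. -/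
theorem stmt_11 (d N : ℕ) (hN : 0 < N)
    (x : Fin N → EuclideanSpace ℝ (Fin d)) (lam y : Fin N → ℝ)
    (Rmin Rmax pmax γ : ℝ) (hγ : 0 < γ ∧ γ < 1) (hRmin : 0 < Rmin)
    (hnorm : ∀ n, Rmin ≤ ‖x n‖ ∧ ‖x n‖ ≤ Rmax)
    (hpmax : ∀ n k, n ≠ k → |(inner ℝ (x n) (x k) : ℝ)| ≤ pmax)
    (hy : ∀ n, y n = 1 ∨ y n = -1)
    (hlam : ∀ n, 1 / (2 * Rmax ^ 2) < lam n ∧ lam n < 3 / (2 * γ ^ 2 * Rmin ^ 2))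
    (hcond : pmax ≤ γ ^ 3 * Rmin ^ 4 / (3 * N * Rmax ^ 2)) :
    ∀ n, (inner ℝ (x n) (∑ k, (lam k * y k) • x k) : ℝ) ≤
      3 * Rmax ^ 2 / (2 * γ ^ 2 * Rmin ^ 2) + γ * Rmin ^ 2 / (2 * Rmax ^ 2) :=
  stmt_11_general d N x lam y Rmin Rmax pmax γ hγ hRmin hnorm hpmax hy hlam hcond
end

section
/- Let x_1,...,x_N ∈ ℝ^d with R_min ≤ ‖x_n‖ ≤ R_max, |⟨x_n,x_k⟩| ≤ p_max ≤ γ^3 R_min^4/(3N R_max^2) for n ≠ k, weights λ_n ∈ (1/(2R_max^2), 3/(2γ^2 R_min^2)), labels y_n ∈ {±1}, and q = ∑_n λ_n y_n x_n. Then ‖q‖ ≥ R_min √((1−γ)N) / (2R_max^2), and consequently for every n, ⟨x_n, q/‖q‖⟩ ≤ C/√N where C = (3R_max^4 + γ^3 R_min^4)/(γ^2 R_min^3 √(1−γ)). -/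
open Real Finset RealInnerProductSpace

/-!
Write `q = ∑ₖ λₖ yₖ xₖ`. Pairing `q` with `xₙ` splits off the diagonal term `λₙ yₙ ‖xₙ‖²` from a
cross term that the coherence bound makes at most `N λ_max p_max ≤ γ R_min² / (2 R_max²)`. Hence
every `yₙ ⟨xₙ, q⟩` is at least `(1 - γ) R_min² / (2 R_max²)`, and since
`‖q‖² = ∑ₙ λₙ yₙ ⟨xₙ, q⟩` this gives the lower bound on `‖q‖`. The upper bound on `⟨xₙ, q⟩` from the
same splitting, divided by this lower bound, gives the bound on `⟨xₙ, q / ‖q‖⟩`.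
-/

variable {ι E : Type*} [Fintype ι] [NormedAddCommGroup E] [InnerProductSpace ℝ E]

theorem real_inner_sum_smul_eq_add_sum_erase [DecidableEq ι] (x : ι → E) (c : ι → ℝ) (n : ι) :
    ⟪x n, ∑ k, c k • x k⟫ = c n * ‖x n‖ ^ 2 + ∑ k ∈ univ.erase n, c k * ⟪x n, x k⟫ := by
  simp_rw [inner_sum, real_inner_smul_right]
  rw [← add_sum_erase _ _ (mem_univ n), real_inner_self_eq_norm_sq]

theorem norm_sum_smul_sq_eq (x : ι → E) (c : ι → ℝ) :
    ‖∑ k, c k • x k‖ ^ 2 = ∑ n, c n * ⟪x n, ∑ k, c k • x k⟫ := by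
  rw [← real_inner_self_eq_norm_sq, sum_inner]
  simp_rw [real_inner_smul_left]

theorem abs_sum_erase_mul_inner_le [DecidableEq ι] {x : ι → E} {c : ι → ℝ} {C p : ℝ}
    (hc : ∀ k, |c k| ≤ C) (hp : 0 ≤ p) (hx : ∀ n k, n ≠ k → |⟪x n, x k⟫| ≤ p) (n : ι) :
    |∑ k ∈ univ.erase n, c k * ⟪x n, x k⟫| ≤ Fintype.card ι * (C * p) := by
  have hC : 0 ≤ C := (abs_nonneg _).trans (hc n)
  calc |∑ k ∈ univ.erase n, c k * ⟪x n, x k⟫|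
      ≤ ∑ k ∈ univ.erase n, |c k * ⟪x n, x k⟫| := abs_sum_le_sum_abs _ _
    _ ≤ ∑ k ∈ univ.erase n, C * p := sum_le_sum fun k hk => by
        rw [abs_mul]
        exact mul_le_mul (hc k) (hx n k (ne_of_mem_erase hk).symm) (abs_nonneg _) hC
    _ ≤ ∑ _k, C * p :=
        sum_le_sum_of_subset_of_nonneg (erase_subset _ _) fun _ _ _ => mul_nonneg hC hp
    _ = Fintype.card ι * (C * p) := by simp

section Labels

variable [DecidableEq ι] {x : ι → E} {lam y : ι → ℝ} {n : ι} {ε : ℝ}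

theorem real_inner_sum_smul_le (hy : y n = 1 ∨ y n = -1) {A R : ℝ} (hlam : 0 ≤ lam n)
    (hA : lam n ≤ A) (hR : ‖x n‖ ≤ R)
    (hε : |∑ k ∈ univ.erase n, lam k * y k * ⟪x n, x k⟫| ≤ ε) :
    ⟪x n, ∑ k, (lam k * y k) • x k⟫ ≤ A * R ^ 2 + ε := by
  have hxR : ‖x n‖ ^ 2 ≤ R ^ 2 := pow_le_pow_left₀ (norm_nonneg _) hR 2
  have hdiag : lam n * y n * ‖x n‖ ^ 2 ≤ A * R ^ 2 := by
    rcases hy with h | h <;> rw [h] <;> nlinarith [sq_nonneg ‖x n‖]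
  rw [real_inner_sum_smul_eq_add_sum_erase]
  linarith [(abs_le.mp hε).2]

theorem sub_le_mul_real_inner_sum_smul (hy : y n = 1 ∨ y n = -1) {a r : ℝ} (ha : 0 ≤ a)
    (hlam : a ≤ lam n) (hr : 0 ≤ r) (hx : r ≤ ‖x n‖)
    (hε : |∑ k ∈ univ.erase n, lam k * y k * ⟪x n, x k⟫| ≤ ε) :
    a * r ^ 2 - ε ≤ y n * ⟪x n, ∑ k, (lam k * y k) • x k⟫ := by
  have hdiag : a * r ^ 2 ≤ lam n * ‖x n‖ ^ 2 :=
    mul_le_mul hlam (pow_le_pow_left₀ hr hx 2) (sq_nonneg r) (ha.trans hlam)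
  obtain ⟨hε₁, hε₂⟩ := abs_le.mp hε
  rw [real_inner_sum_smul_eq_add_sum_erase]
  rcases hy with h | h <;> rw [h] <;> linarith

end Labels

theorem card_mul_le_norm_sum_smul_sq {x : ι → E} {lam y : ι → ℝ} {a b : ℝ} (ha : 0 ≤ a)
    (hb : 0 ≤ b) (hlam : ∀ n, a ≤ lam n)
    (hy : ∀ n, b ≤ y n * ⟪x n, ∑ k, (lam k * y k) • x k⟫) :
    Fintype.card ι * (a * b) ≤ ‖∑ k, (lam k * y k) • x k‖ ^ 2 := by
  rw [norm_sum_smul_sq_eq]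
  calc Fintype.card ι * (a * b) = ∑ _n : ι, a * b := by simp
    _ ≤ ∑ n, lam n * (y n * ⟪x n, ∑ k, (lam k * y k) • x k⟫) :=
        sum_le_sum fun n _ => mul_le_mul (hlam n) (hy n) hb (ha.trans (hlam n))
    _ = _ := by simp_rw [mul_assoc]

theorem real_inner_inv_norm_smul_le {v q : E} {U L : ℝ} (hU : ⟪v, q⟫ ≤ U) (hU0 : 0 ≤ U)
    (hL : 0 < L) (hLq : L ≤ ‖q‖) : ⟪v, ‖q‖⁻¹ • q⟫ ≤ U / L := by
  rw [real_inner_smul_right, inv_mul_eq_div]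
  calc ⟪v, q⟫ / ‖q‖ ≤ U / ‖q‖ := by gcongr
    _ ≤ U / L := by gcongr

theorem abs_sum_erase_label_mul_inner_le {N : ℕ} {x : Fin N → E} {lam y : Fin N → ℝ}
    {Rmin Rmax pmax γ : ℝ} (hγ : 0 < γ) (hRmin : 0 < Rmin) (hRmax : 0 < Rmax)
    (hpmax : ∀ n k, n ≠ k → |⟪x n, x k⟫| ≤ pmax) (hy : ∀ n, y n = 1 ∨ y n = -1)
    (hlam : ∀ n, 0 ≤ lam n ∧ lam n ≤ 3 / (2 * γ ^ 2 * Rmin ^ 2))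
    (hcond : pmax ≤ γ ^ 3 * Rmin ^ 4 / (3 * N * Rmax ^ 2)) (n : Fin N) :
    |∑ k ∈ univ.erase n, lam k * y k * ⟪x n, x k⟫| ≤ γ * Rmin ^ 2 / (2 * Rmax ^ 2) := by
  have hc : ∀ k, |lam k * y k| ≤ 3 / (2 * γ ^ 2 * Rmin ^ 2) := fun k => by
    rcases hy k with h | h <;> simp [h, abs_of_nonneg (hlam k).1, (hlam k).2]
  have hN : (0 : ℝ) < N := Nat.cast_pos.mpr n.pos
  -- `pmax` may be negative when `N = 1`; the counting bound needs a nonnegative one.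
  have hP : max pmax 0 ≤ γ ^ 3 * Rmin ^ 4 / (3 * N * Rmax ^ 2) := max_le hcond (by positivity)
  refine (abs_sum_erase_mul_inner_le hc (le_max_right pmax 0)
    (fun n k h => (hpmax n k h).trans (le_max_left _ _)) n).trans ?_
  calc (Fintype.card (Fin N) : ℝ) * (3 / (2 * γ ^ 2 * Rmin ^ 2) * max pmax 0)
      ≤ N * (3 / (2 * γ ^ 2 * Rmin ^ 2) * (γ ^ 3 * Rmin ^ 4 / (3 * N * Rmax ^ 2))) := by
        rw [Fintype.card_fin]
        gcongr
    _ = γ * Rmin ^ 2 / (2 * Rmax ^ 2) := by field_simp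

/-- Lower bound `‖q‖ ≥ R_min √((1−γ)N)/(2R_max²)` for `q = ∑ λ_n y_n x_n`, and the
resulting bound `⟨x_n, q/‖q‖⟩ ≤ C/√N` with
`C = (3R_max⁴ + γ³R_min⁴)/(γ²R_min³√(1−γ))`. -/
theorem stmt_12 (d N : ℕ) (hN : 0 < N)
    (x : Fin N → EuclideanSpace ℝ (Fin d)) (lam y : Fin N → ℝ)
    (Rmin Rmax pmax γ : ℝ) (hγ : 0 < γ ∧ γ < 1) (hRmin : 0 < Rmin)
    (hnorm : ∀ n, Rmin ≤ ‖x n‖ ∧ ‖x n‖ ≤ Rmax)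
    (hpmax : ∀ n k, n ≠ k → |(inner ℝ (x n) (x k) : ℝ)| ≤ pmax)
    (hy : ∀ n, y n = 1 ∨ y n = -1)
    (hlam : ∀ n, 1 / (2 * Rmax ^ 2) < lam n ∧ lam n < 3 / (2 * γ ^ 2 * Rmin ^ 2))
    (hcond : pmax ≤ γ ^ 3 * Rmin ^ 4 / (3 * N * Rmax ^ 2)) :
    Rmin * Real.sqrt ((1 - γ) * N) / (2 * Rmax ^ 2) ≤ ‖∑ n, (lam n * y n) • x n‖ ∧
    ∀ n, (inner ℝ (x n) (‖∑ k, (lam k * y k) • x k‖⁻¹ • ∑ k, (lam k * y k) • x k) : ℝ) ≤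
      (3 * Rmax ^ 4 + γ ^ 3 * Rmin ^ 4) / (γ ^ 2 * Rmin ^ 3 * Real.sqrt (1 - γ)) /
        Real.sqrt N := by
  obtain ⟨hγ0, hγ1⟩ := hγ
  have hRmax : 0 < Rmax := hRmin.trans_le ((hnorm ⟨0, hN⟩).1.trans (hnorm ⟨0, hN⟩).2)
  have h1γ : 0 < 1 - γ := by linarith
  have hlam0 : ∀ n, 0 ≤ lam n :=
    fun n => (by positivity : 0 ≤ 1 / (2 * Rmax ^ 2)).trans (hlam n).1.le
  have hcross := abs_sum_erase_label_mul_inner_le hγ0 hRmin hRmax hpmax hy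
    (fun n => ⟨hlam0 n, (hlam n).2.le⟩) hcond
  have hlower : ∀ n, (1 - γ) * Rmin ^ 2 / (2 * Rmax ^ 2) ≤
      y n * inner ℝ (x n) (∑ k, (lam k * y k) • x k) := fun n =>
    (le_of_eq (by field_simp)).trans (sub_le_mul_real_inner_sum_smul (hy n) (by positivity)
      (hlam n).1.le hRmin.le (hnorm n).1 (hcross n))
  have hsq := card_mul_le_norm_sum_smul_sq (by positivity) (by positivity)
    (fun n => (hlam n).1.le) hlower
  have hL : Rmin * √((1 - γ) * N) / (2 * Rmax ^ 2) ≤ ‖∑ n, (lam n * y n) • x n‖ := by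
    refine le_of_pow_le_pow_left₀ two_ne_zero (norm_nonneg _) (le_of_eq_of_le ?_ hsq)
    rw [div_pow, mul_pow, sq_sqrt (by positivity), Fintype.card_fin]
    field_simp
  refine ⟨hL, fun n => (real_inner_inv_norm_smul_le
    (real_inner_sum_smul_le (hy n) (hlam0 n) (hlam n).2.le (hnorm n).2 (hcross n))
    (by positivity) (by positivity) hL).trans_eq ?_⟩
  rw [sqrt_mul h1γ.le]
  field_simp
end
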